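/- If U is a Nielsen reduced subset of a free group F, then U is a free basis of the subgroup it generates; in particular, no nonempty reduced product of elements of U^{±1} without adjacent inverse pairs equals the identity. -/

import Mathlib

/-- The free length of an element of a free group. -/
def freeLen {α : Type*} [DecidableEq α] (w : FreeGroup α) : ℕ := w.toWord.length

/-- A set of elements of a free group is Nielsen reduced if conditions
(N0), (N1), (N2) hold for all triples of elements of the form `u^{±1}`, `u ∈ U`. -/
def IsNielsenReduced {α : Type*} [DecidableEq α] (U : Set (FreeGroup α)) : Prop :=
  ∀ v₁ v₂ v₃ : FreeGroup α,
    (∃ u ∈ U, v₁ = u ∨ v₁ = u⁻¹) → (∃ u ∈ U, v₂ = u ∨ v₂ = u⁻¹) →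
    (∃ u ∈ U, v₃ = u ∨ v₃ = u⁻¹) →
    v₁ ≠ 1 ∧
    (v₁ * v₂ ≠ 1 → freeLen v₁ ≤ freeLen (v₁ * v₂) ∧ freeLen v₂ ≤ freeLen (v₁ * v₂)) ∧
    (v₁ * v₂ ≠ 1 → v₂ * v₃ ≠ 1 →
      (freeLen v₁ : ℤ) - freeLen v₂ + freeLen v₃ < freeLen (v₁ * v₂ * v₃))

/-!
Write `(x | y)` for the Gromov product at `1` in the Cayley tree of `F`, i.e. the length of the
common prefix of the reduced words of `x` and `y`. Then `|x y| = |x| + |y| - 2 (x⁻¹ | y)` and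
`min (x | y) (y | z) ≤ (x | z)`. For consecutive letters `x, y, z` of a reduced product, (N1) says
that `x` cancels at most half of `y`, and (N2) that the parts of `y` cancelled from the left and
from the right do not overlap: `(x⁻¹ | y) + (y⁻¹ | z) < |y|`. By induction from the right, a
reduced product `y z ⋯` therefore still begins with the part of `y` that `x` does not cancel, so
`(x⁻¹ | y z ⋯) = (x⁻¹ | y) < |y z ⋯|`. Taking `x = y`, which is allowed since `y² ≠ 1` in the
torsion-free group `F`, shows that the product has positive length.
-/

namespace List

variable {β : Type*} [DecidableEq β]

def commonPrefixLength : List β → List β → ℕ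
  | a :: l, b :: l' => if a = b then commonPrefixLength l l' + 1 else 0
  | _, _ => 0

@[simp]
theorem commonPrefixLength_nil_left (l : List β) : commonPrefixLength [] l = 0 := by
  cases l <;> rfl

@[simp]
theorem commonPrefixLength_nil_right (l : List β) : commonPrefixLength l [] = 0 := by
  cases l <;> rfl

@[simp]
theorem commonPrefixLength_cons_cons (a b : β) (l l' : List β) :
    commonPrefixLength (a :: l) (b :: l') =
      if a = b then commonPrefixLength l l' + 1 else 0 := rfl

theorem min_commonPrefixLength_le : ∀ l₁ l₂ l₃ : List β,
    min (commonPrefixLength l₁ l₂) (commonPrefixLength l₂ l₃) ≤ commonPrefixLength l₁ l₃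
  | [], _, _ | _ :: _, [], _ | _ :: _, _ :: _, [] => by simp
  | a :: l₁, b :: l₂, c :: l₃ => by
    have := min_commonPrefixLength_le l₁ l₂ l₃
    simp only [commonPrefixLength_cons_cons]
    by_cases hab : a = b
    · subst hab
      by_cases hac : a = c
      · simp [hac]; omega
      · simp [hac]
    · simp [hab]

end List

namespace FreeGroup

variable {α : Type*} [DecidableEq α]

open List

theorem IsReduced.invRev {L : List (α × Bool)} (h : IsReduced L) : IsReduced (invRev L) :=
  isReduced_iff_reduce_eq.mpr (by rw [reduce_invRev, h.reduce_eq])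

theorem length_reduce_invRev_append : ∀ {L₁ L₂ : List (α × Bool)}, IsReduced L₁ → IsReduced L₂ →
    (reduce (invRev L₁ ++ L₂)).length + 2 * commonPrefixLength L₁ L₂ = L₁.length + L₂.length
  | [], L₂, _, h₂ => by simp [h₂.reduce_eq]
  | L₁@(_ :: _), [], h₁, _ => by simp [h₁.invRev.reduce_eq]
  | p :: L₁, q :: L₂, h₁, h₂ => by
    by_cases hpq : p = q
    · subst hpq
      have hcancel : reduce (invRev (p :: L₁) ++ p :: L₂) = reduce (invRev L₁ ++ L₂) := by
        simpa [invRev_cons, invRev] using reduce.Step.eq (Red.Step.not_rev (L₁ := invRev L₁)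
          (L₂ := L₂) (x := p.1) (b := p.2))
      have := length_reduce_invRev_append (L₁ := L₁) (L₂ := L₂) h₁.tail h₂.tail
      simp only [hcancel, commonPrefixLength_cons_cons, if_pos, length_cons]
      omega
    · have hred : IsReduced (invRev (p :: L₁) ++ q :: L₂) := by
        refine isChain_append.mpr ⟨h₁.invRev, h₂, ?_⟩
        simp only [invRev, map_cons, reverse_cons, getLast?_append, getLast?_singleton,
          getLast?_reverse, head?_map, Option.some_or, Option.mem_def, Option.some.injEq, head?_cons,
          forall_eq', Bool.not_eq_eq_eq_not]
        exact fun h => Bool.eq_not_iff.mpr fun h' => hpq (Prod.ext h h')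
      simp [hred.reduce_eq, hpq]

def gromovProduct (x y : FreeGroup α) : ℕ := commonPrefixLength x.toWord y.toWord

theorem norm_inv_mul_add_two_mul_gromovProduct (x y : FreeGroup α) :
    (x⁻¹ * y).norm + 2 * gromovProduct x y = x.norm + y.norm := by
  have h := length_reduce_invRev_append (isReduced_toWord (x := x)) (isReduced_toWord (x := y))
  rwa [← toWord_inv, ← toWord_mul] at h

theorem norm_mul_add_two_mul_gromovProduct (x y : FreeGroup α) :
    (x * y).norm + 2 * gromovProduct x⁻¹ y = x.norm + y.norm := by
  simpa using norm_inv_mul_add_two_mul_gromovProduct x⁻¹ y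

theorem gromovProduct_comm (x y : FreeGroup α) : gromovProduct x y = gromovProduct y x := by
  have hxy := norm_inv_mul_add_two_mul_gromovProduct x y
  have hyx := norm_inv_mul_add_two_mul_gromovProduct y x
  rw [← norm_inv_eq, mul_inv_rev, inv_inv] at hxy
  omega

theorem min_gromovProduct_le (x y z : FreeGroup α) :
    min (gromovProduct x y) (gromovProduct y z) ≤ gromovProduct x z :=
  min_commonPrefixLength_le _ _ _

theorem gromovProduct_eq_of_lt {x y z : FreeGroup α} (h : gromovProduct x y < gromovProduct y z) :
    gromovProduct x z = gromovProduct x y := by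
  have hxz := min_gromovProduct_le x y z
  have hxy := min_gromovProduct_le x z y
  rw [gromovProduct_comm z y] at hxy
  omega

theorem gromovProduct_mul_left_cancel (x y : FreeGroup α) :
    gromovProduct x (x * y) + gromovProduct x⁻¹ y = x.norm := by
  have h₁ := norm_inv_mul_add_two_mul_gromovProduct x (x * y)
  have h₂ := norm_mul_add_two_mul_gromovProduct x y
  rw [inv_mul_cancel_left] at h₁
  omega

end FreeGroup

open FreeGroup

theorem freeLen_eq_norm {α : Type*} [DecidableEq α] (x : FreeGroup α) : freeLen x = x.norm := rfl

namespace IsNielsenReduced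

variable {α : Type*} [DecidableEq α] {U : Set (FreeGroup α)} {x y z : FreeGroup α}

/-- `x ∈ U ∪ U⁻¹`, in the form used by `IsNielsenReduced`. -/
def MemSymm (U : Set (FreeGroup α)) (x : FreeGroup α) : Prop := ∃ u ∈ U, x = u ∨ x = u⁻¹

theorem two_mul_gromovProduct_le_norm (hU : IsNielsenReduced U) (hx : MemSymm U x)
    (hy : MemSymm U y) (hxy : x * y ≠ 1) : 2 * gromovProduct x⁻¹ y ≤ y.norm := by
  have hN1 := ((hU x y y hx hy hy).2.1 hxy).1
  have := norm_mul_add_two_mul_gromovProduct x y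
  rw [freeLen_eq_norm, freeLen_eq_norm] at hN1
  omega

theorem gromovProduct_add_gromovProduct_lt_norm (hU : IsNielsenReduced U) (hx : MemSymm U x)
    (hy : MemSymm U y) (hz : MemSymm U z) (hxy : x * y ≠ 1) (hyz : y * z ≠ 1) :
    gromovProduct x⁻¹ y + gromovProduct y⁻¹ z < y.norm := by
  have hN2 := (hU x y z hx hy hz).2.2 hxy hyz
  simp only [freeLen_eq_norm, mul_assoc] at hN2
  have h₁ := norm_mul_add_two_mul_gromovProduct x (y * z)
  have h₂ := norm_mul_add_two_mul_gromovProduct y z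
  have h₃ := gromovProduct_mul_left_cancel y z
  have h₄ := min_gromovProduct_le x⁻¹ y (y * z)
  omega

theorem gromovProduct_inv_prod_eq_and_lt_norm (hU : IsNielsenReduced U) :
    ∀ (l : List (FreeGroup α)) (y : FreeGroup α), (∀ w ∈ y :: l, MemSymm U w) →
      (y :: l).IsChain (fun a b => a * b ≠ 1) → ∀ x, MemSymm U x → x * y ≠ 1 →
        gromovProduct x⁻¹ (y :: l).prod = gromovProduct x⁻¹ y ∧
          gromovProduct x⁻¹ y < (y :: l).prod.norm
  | [], y, hmem, _, x, hx, hxy => by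
    have hy := hmem y (by simp)
    have hy_ne : y.norm ≠ 0 := norm_eq_zero.not.mpr (hU y y y hy hy hy).1
    have := two_mul_gromovProduct_le_norm hU hx hy hxy
    simp only [List.prod_singleton, true_and]
    omega
  | z :: l, y, hmem, hchain, x, hx, hxy => by
    have hy := hmem y (by simp)
    have hz := hmem z (by simp)
    obtain ⟨hyz, hchain⟩ := List.isChain_cons_cons.mp hchain
    obtain ⟨hrest, hlt⟩ := gromovProduct_inv_prod_eq_and_lt_norm hU l z
      (fun w hw => hmem w (List.mem_cons_of_mem y hw)) hchain y hy hyz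
    have hnorm := norm_mul_add_two_mul_gromovProduct y (z :: l).prod
    have hcancel := gromovProduct_mul_left_cancel y (z :: l).prod
    have hkey := gromovProduct_add_gromovProduct_lt_norm hU hx hy hz hxy hyz
    rw [List.prod_cons]
    constructor
    -- with `t = (z :: l).prod`, `(y | y t) = |y| - (y⁻¹ | z)` exceeds `(x⁻¹ | y)` by (N2)
    · exact gromovProduct_eq_of_lt (by omega)
    · omega

end IsNielsenReduced

theorem nielsen_reduced_is_free_basis {α : Type*} [DecidableEq α]
    (U : Set (FreeGroup α)) (hU : IsNielsenReduced U)
    (v : List (FreeGroup α)) (hne : v ≠ [])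
    (hmem : ∀ x ∈ v, ∃ u ∈ U, x = u ∨ x = u⁻¹)
    (hred : v.Chain' fun a b => a * b ≠ 1) :
    v.prod ≠ 1 := by
  obtain ⟨y, l, rfl⟩ := List.exists_cons_of_ne_nil hne
  have hy := hmem y (by simp)
  have hyy : y * y ≠ 1 := by
    rw [← sq]
    exact sq_eq_one.not.mpr (hU y y y hy hy hy).1
  have hpos := (hU.gromovProduct_inv_prod_eq_and_lt_norm l y hmem hred y hy hyy).2
  exact FreeGroup.norm_eq_zero.not.mp (by omega)
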